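/- Let ℏ > 0 and σ > 0. For smooth (infinitely differentiable) functions f : ℝ² → ℝ with coordinates (p,q), define the differential operators (L₁f)(p,q) = −p·∂_qf(p,q) + (ℏσ²/2)·∂_p²f(p,q) and (L₂f)(p,q) = (ℏ/2)·p²·∂_q²f(p,q), and the iterated commutators ad⁰(f) = L₂f, ad^{k+1}(f) = L₁(ad^k(f)) − ad^k applied to L₁f (i.e. ad^{k+1} = [L₁, ad^k]). Then for every smooth f and all (p,q) ∈ ℝ²: (i) ad¹(f) = (ℏ²σ²/2)·(2p·∂_p∂_q²f + ∂_q²f); (ii) ad²(f) = ℏ²σ²·(p·∂_q³f + ℏσ²·∂_p²∂_q²f); (iii) ad³(f) = 3ℏ³σ⁴·∂_p∂_q³f; (iv) ad⁴(f) = 3ℏ³σ⁴·∂_q⁴f; (v) ad⁵(f) = 0. In particular, the commutator expansion e^{sL₁}L₂e^{−sL₁} = Σ_k (s^k/k!)·ad^k terminates after k = 4. -/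

import Mathlib

/-- Partial derivative in the first (momentum) variable `p`. -/
noncomputable def pdP (f : ℝ → ℝ → ℝ) : ℝ → ℝ → ℝ := fun p q => deriv (fun p' => f p' q) p

/-- Partial derivative in the second (position) variable `q`. -/
noncomputable def pdQ (f : ℝ → ℝ → ℝ) : ℝ → ℝ → ℝ := fun p q => deriv (fun q' => f p q') q

/-- The operator `L₁ = −p∂_q + (ℏσ²/2)∂_p²` acting on phase-space functions. -/
noncomputable def opL1 (hbar σ : ℝ) (f : ℝ → ℝ → ℝ) : ℝ → ℝ → ℝ :=
  fun p q => -p * pdQ f p q + hbar * σ ^ 2 / 2 * pdP (pdP f) p q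

/-- The operator `L₂ = (ℏ/2)p²∂_q²` acting on phase-space functions. -/
noncomputable def opL2 (hbar : ℝ) (f : ℝ → ℝ → ℝ) : ℝ → ℝ → ℝ :=
  fun p q => hbar / 2 * p ^ 2 * pdQ (pdQ f) p q

/-- Iterated commutators: `ad⁰ = L₂`, `ad^{k+1} = [L₁, ad^k]`. -/
noncomputable def adL (hbar σ : ℝ) : ℕ → (ℝ → ℝ → ℝ) → (ℝ → ℝ → ℝ)
  | 0 => opL2 hbar
  | k + 1 => fun f p q =>
      opL1 hbar σ (adL hbar σ k f) p q - adL hbar σ k (opL1 hbar σ f) p q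

section Helpers
open Function


abbrev Sm (g : ℝ → ℝ → ℝ) : Prop := ContDiff ℝ (⊤ : ℕ∞) (Function.uncurry g)

lemma lineP_hasDerivAt (q p : ℝ) : HasDerivAt (fun p' : ℝ => (p', q)) ((1:ℝ), (0:ℝ)) p :=
  (hasDerivAt_id p).prodMk (hasDerivAt_const p q)

lemma lineQ_hasDerivAt (p q : ℝ) : HasDerivAt (fun q' : ℝ => (p, q')) ((0:ℝ), (1:ℝ)) q :=
  (hasDerivAt_const q p).prodMk (hasDerivAt_id q)

lemma pdP_eq {g : ℝ → ℝ → ℝ} (hg : Sm g) (p q : ℝ) :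
    pdP g p q = fderiv ℝ (uncurry g) (p, q) (1, 0) := by
  have h : HasDerivAt (fun p' => g p' q) (fderiv ℝ (uncurry g) (p, q) (1, 0)) p := by
    have := ((hg.differentiable (by simp)) (p, q)).hasFDerivAt.comp_hasDerivAt p (lineP_hasDerivAt q p)
    simpa [Function.comp_def, uncurry] using this
  exact h.deriv

lemma pdQ_eq {g : ℝ → ℝ → ℝ} (hg : Sm g) (p q : ℝ) :
    pdQ g p q = fderiv ℝ (uncurry g) (p, q) (0, 1) := by
  have h : HasDerivAt (fun q' => g p q') (fderiv ℝ (uncurry g) (p, q) (0, 1)) q := by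
    have := ((hg.differentiable (by simp)) (p, q)).hasFDerivAt.comp_hasDerivAt q (lineQ_hasDerivAt p q)
    simpa [Function.comp_def, uncurry] using this
  exact h.deriv

lemma hdP {g : ℝ → ℝ → ℝ} (hg : Sm g) (p q : ℝ) :
    HasDerivAt (fun p' => g p' q) (pdP g p q) p := by
  rw [pdP_eq hg]
  have := ((hg.differentiable (by simp)) (p, q)).hasFDerivAt.comp_hasDerivAt p (lineP_hasDerivAt q p)
  simpa [Function.comp_def, uncurry] using this

lemma hdQ {g : ℝ → ℝ → ℝ} (hg : Sm g) (p q : ℝ) :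
    HasDerivAt (fun q' => g p q') (pdQ g p q) q := by
  rw [pdQ_eq hg]
  have := ((hg.differentiable (by simp)) (p, q)).hasFDerivAt.comp_hasDerivAt q (lineQ_hasDerivAt p q)
  simpa [Function.comp_def, uncurry] using this

lemma Sm.pdP' {g : ℝ → ℝ → ℝ} (hg : Sm g) : Sm (pdP g) := by
  have h : uncurry (pdP g) = fun x : ℝ × ℝ => fderiv ℝ (uncurry g) x (1, 0) := by
    funext x
    exact pdP_eq hg x.1 x.2
  unfold Sm; rw [h]
  exact (contDiff_infty_iff_fderiv.mp hg).2.clm_apply contDiff_const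

lemma Sm.pdQ' {g : ℝ → ℝ → ℝ} (hg : Sm g) : Sm (pdQ g) := by
  have h : uncurry (pdQ g) = fun x : ℝ × ℝ => fderiv ℝ (uncurry g) x (0, 1) := by
    funext x
    exact pdQ_eq hg x.1 x.2
  unfold Sm; rw [h]
  exact (contDiff_infty_iff_fderiv.mp hg).2.clm_apply contDiff_const

lemma pdPQ_comm {g : ℝ → ℝ → ℝ} (hg : Sm g) : pdP (pdQ g) = pdQ (pdP g) := by
  funext p q
  have hD : ContDiff ℝ (⊤ : ℕ∞) (fderiv ℝ (uncurry g)) := (contDiff_infty_iff_fderiv.mp hg).2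
  have e1 : uncurry (pdQ g) = fun x : ℝ × ℝ => fderiv ℝ (uncurry g) x (0, 1) :=
    funext fun x => pdQ_eq hg x.1 x.2
  have e2 : uncurry (pdP g) = fun x : ℝ × ℝ => fderiv ℝ (uncurry g) x (1, 0) :=
    funext fun x => pdP_eq hg x.1 x.2
  rw [pdP_eq hg.pdQ', pdQ_eq hg.pdP', e1, e2]
  have hL : ∀ v : ℝ × ℝ, fderiv ℝ (fun x : ℝ × ℝ => fderiv ℝ (uncurry g) x v) (p, q)
      = (ContinuousLinearMap.apply ℝ ℝ v).comp (fderiv ℝ (fderiv ℝ (uncurry g)) (p, q)) :=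
    fun v => ((ContinuousLinearMap.apply ℝ ℝ v).hasFDerivAt.comp (p, q)
      ((hD.differentiable (by simp)) (p, q)).hasFDerivAt).fderiv
  rw [hL, hL]
  simp only [ContinuousLinearMap.coe_comp', Function.comp_apply, ContinuousLinearMap.apply_apply]
  exact (hg.contDiffAt.isSymmSndFDerivAt (by simp only [minSmoothness_of_isRCLikeNormedField]; exact WithTop.coe_le_coe.mpr le_top)) _ _

lemma Sm_add {g h : ℝ → ℝ → ℝ} (hg : Sm g) (hh : Sm h) :
    Sm (fun p q => g p q + h p q) := hg.add hh

lemma Sm_monomial (a : ℝ) (m : ℕ) {g : ℝ → ℝ → ℝ} (hg : Sm g) :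
    Sm (fun p q => a * p ^ m * g p q) :=
  (contDiff_const.mul ((contDiff_fst (E := ℝ) (F := ℝ)).pow m)).mul hg

lemma pdQ_add {g h : ℝ → ℝ → ℝ} (hg : Sm g) (hh : Sm h) :
    pdQ (fun p q => g p q + h p q) = fun p q => pdQ g p q + pdQ h p q := by
  funext p q
  exact ((hdQ hg p q).add (hdQ hh p q)).deriv

lemma pdP_add {g h : ℝ → ℝ → ℝ} (hg : Sm g) (hh : Sm h) :
    pdP (fun p q => g p q + h p q) = fun p q => pdP g p q + pdP h p q := by
  funext p q
  exact ((hdP hg p q).add (hdP hh p q)).deriv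

lemma pdQ_monomial (a : ℝ) (m : ℕ) {g : ℝ → ℝ → ℝ} (hg : Sm g) :
    pdQ (fun p q => a * p ^ m * g p q) = fun p q => a * p ^ m * pdQ g p q := by
  funext p q
  exact ((hdQ hg p q).const_mul (a * p ^ m)).deriv

lemma pdP_monomial (a : ℝ) (m : ℕ) {g : ℝ → ℝ → ℝ} (hg : Sm g) :
    pdP (fun p q => a * p ^ m * g p q) =
      fun p q => a * (↑m * p ^ (m - 1)) * g p q + a * p ^ m * pdP g p q := by
  funext p q
  exact (((hasDerivAt_pow m p).const_mul a).mul (hdP hg p q)).deriv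




lemma Sm_opL1 (hbar σ : ℝ) {g : ℝ → ℝ → ℝ} (hg : Sm g) : Sm (opL1 hbar σ g) := by
  have : opL1 hbar σ g = fun p q =>
      (-1) * p ^ 1 * pdQ g p q + hbar * σ ^ 2 / 2 * p ^ 0 * pdP (pdP g) p q := by
    funext p q; simp only [opL1]; ring
  rw [this]
  exact Sm_add (Sm_monomial _ _ hg.pdQ') (Sm_monomial _ _ hg.pdP'.pdP')

lemma ad1_eq (hbar σ : ℝ) {g : ℝ → ℝ → ℝ} (hg : Sm g) :
    adL hbar σ 1 g = fun p q =>
      hbar ^ 2 * σ ^ 2 / 2 * (2 * p * pdP (pdQ (pdQ g)) p q + pdQ (pdQ g) p q) := by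
  have hQ := hg.pdQ'; have hQQ := hQ.pdQ'
  have hP := hg.pdP'; have hPP := hP.pdP'
  have hPQQ := hQQ.pdP'
  have d1 : pdQ (fun p q => hbar / 2 * p ^ 2 * pdQ (pdQ g) p q)
      = fun p q => hbar / 2 * p ^ 2 * pdQ (pdQ (pdQ g)) p q := pdQ_monomial _ _ hQQ
  have d2 : pdP (fun p q => hbar / 2 * p ^ 2 * pdQ (pdQ g) p q)
      = fun p q => hbar * p ^ 1 * pdQ (pdQ g) p q
          + hbar / 2 * p ^ 2 * pdP (pdQ (pdQ g)) p q := by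
    rw [pdP_monomial _ _ hQQ]; funext p q; push_cast; ring
  have d3 : pdP (fun p q => hbar * p ^ 1 * pdQ (pdQ g) p q
        + hbar / 2 * p ^ 2 * pdP (pdQ (pdQ g)) p q)
      = fun p q => (hbar * (1 * p ^ 0) * pdQ (pdQ g) p q + hbar * p ^ 1 * pdP (pdQ (pdQ g)) p q)
        + (hbar / 2 * (2 * p ^ 1) * pdP (pdQ (pdQ g)) p q
            + hbar / 2 * p ^ 2 * pdP (pdP (pdQ (pdQ g))) p q) := by
    rw [pdP_add (Sm_monomial _ _ hQQ) (Sm_monomial _ _ hPQQ),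
        pdP_monomial _ _ hQQ, pdP_monomial _ _ hPQQ]
    funext p q; push_cast; ring
  have e1 : opL1 hbar σ g = fun p q =>
      (-1) * p ^ 1 * pdQ g p q + hbar * σ ^ 2 / 2 * p ^ 0 * pdP (pdP g) p q := by
    funext p q; simp only [opL1]; ring
  have dq1 : pdQ (fun p q => (-1) * p ^ 1 * pdQ g p q
        + hbar * σ ^ 2 / 2 * p ^ 0 * pdP (pdP g) p q)
      = fun p q => (-1) * p ^ 1 * pdQ (pdQ g) p q
          + hbar * σ ^ 2 / 2 * p ^ 0 * pdQ (pdP (pdP g)) p q := by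
    rw [pdQ_add (Sm_monomial _ _ hQ) (Sm_monomial _ _ hPP),
        pdQ_monomial _ _ hQ, pdQ_monomial _ _ hPP]
  have dq2 : pdQ (fun p q => (-1) * p ^ 1 * pdQ (pdQ g) p q
        + hbar * σ ^ 2 / 2 * p ^ 0 * pdQ (pdP (pdP g)) p q)
      = fun p q => (-1) * p ^ 1 * pdQ (pdQ (pdQ g)) p q
          + hbar * σ ^ 2 / 2 * p ^ 0 * pdQ (pdQ (pdP (pdP g))) p q := by
    rw [pdQ_add (Sm_monomial _ _ hQQ) (Sm_monomial _ _ hPP.pdQ'),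
        pdQ_monomial _ _ hQQ, pdQ_monomial _ _ hPP.pdQ']
  funext p q
  simp only [adL]
  rw [e1]
  simp only [opL1, opL2]
  rw [show opL2 hbar g = fun p q => hbar / 2 * p ^ 2 * pdQ (pdQ g) p q from rfl]
  rw [d1, d2, d3, dq1, dq2]
  simp only [← pdPQ_comm hg, ← pdPQ_comm hP, ← pdPQ_comm hQ, ← pdPQ_comm hP.pdQ',
    ← pdPQ_comm hQQ, ← pdPQ_comm hQ.pdP']
  ring

lemma pdQP_swap {u : ℝ → ℝ → ℝ} (hu : Sm u) : pdQ (pdP u) = pdP (pdQ u) :=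
  (pdPQ_comm hu).symm

lemma ad2_eq (hbar σ : ℝ) {g : ℝ → ℝ → ℝ} (hg : Sm g) :
    adL hbar σ 2 g = fun p q => hbar ^ 2 * σ ^ 2 * (p * pdQ (pdQ (pdQ g)) p q
      + hbar * σ ^ 2 * pdP (pdP (pdQ (pdQ g))) p q) := by
  have hQ := hg.pdQ'; have hQQ := hQ.pdQ'; have hQQQ := hQQ.pdQ'
  have hP := hg.pdP'; have hPP := hP.pdP'
  have hPQQ := hQQ.pdP'; have hPPQQ := hPQQ.pdP'
  have hL1 := Sm_opL1 hbar σ hg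
  have eF1 : (fun p q => hbar ^ 2 * σ ^ 2 / 2 * (2 * p * pdP (pdQ (pdQ g)) p q + pdQ (pdQ g) p q))
      = fun p q => hbar ^ 2 * σ ^ 2 * p ^ 1 * pdP (pdQ (pdQ g)) p q
          + hbar ^ 2 * σ ^ 2 / 2 * p ^ 0 * pdQ (pdQ g) p q := by
    funext p q; ring
  have dqF1 : pdQ (fun p q => hbar ^ 2 * σ ^ 2 * p ^ 1 * pdP (pdQ (pdQ g)) p q
        + hbar ^ 2 * σ ^ 2 / 2 * p ^ 0 * pdQ (pdQ g) p q)
      = fun p q => hbar ^ 2 * σ ^ 2 * p ^ 1 * pdQ (pdP (pdQ (pdQ g))) p q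
          + hbar ^ 2 * σ ^ 2 / 2 * p ^ 0 * pdQ (pdQ (pdQ g)) p q := by
    rw [pdQ_add (Sm_monomial _ _ hPQQ) (Sm_monomial _ _ hQQ),
        pdQ_monomial _ _ hPQQ, pdQ_monomial _ _ hQQ]
  have dpF1 : pdP (fun p q => hbar ^ 2 * σ ^ 2 * p ^ 1 * pdP (pdQ (pdQ g)) p q
        + hbar ^ 2 * σ ^ 2 / 2 * p ^ 0 * pdQ (pdQ g) p q)
      = fun p q => (hbar ^ 2 * σ ^ 2 + hbar ^ 2 * σ ^ 2 / 2) * p ^ 0 * pdP (pdQ (pdQ g)) p q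
          + hbar ^ 2 * σ ^ 2 * p ^ 1 * pdP (pdP (pdQ (pdQ g))) p q := by
    rw [pdP_add (Sm_monomial _ _ hPQQ) (Sm_monomial _ _ hQQ),
        pdP_monomial _ _ hPQQ, pdP_monomial _ _ hQQ]
    funext p q; push_cast; ring
  have dppF1 : pdP (fun p q => (hbar ^ 2 * σ ^ 2 + hbar ^ 2 * σ ^ 2 / 2) * p ^ 0 * pdP (pdQ (pdQ g)) p q
        + hbar ^ 2 * σ ^ 2 * p ^ 1 * pdP (pdP (pdQ (pdQ g))) p q)
      = fun p q => (2 * hbar ^ 2 * σ ^ 2 + hbar ^ 2 * σ ^ 2 / 2) * p ^ 0 * pdP (pdP (pdQ (pdQ g))) p q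
          + hbar ^ 2 * σ ^ 2 * p ^ 1 * pdP (pdP (pdP (pdQ (pdQ g)))) p q := by
    rw [pdP_add (Sm_monomial _ _ hPQQ) (Sm_monomial _ _ hPPQQ),
        pdP_monomial _ _ hPQQ, pdP_monomial _ _ hPPQQ]
    funext p q; push_cast; ring
  have e1 : opL1 hbar σ g = fun p q =>
      (-1) * p ^ 1 * pdQ g p q + hbar * σ ^ 2 / 2 * p ^ 0 * pdP (pdP g) p q := by
    funext p q; simp only [opL1]; ring
  have dq1 : pdQ (fun p q => (-1) * p ^ 1 * pdQ g p q
        + hbar * σ ^ 2 / 2 * p ^ 0 * pdP (pdP g) p q)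
      = fun p q => (-1) * p ^ 1 * pdQ (pdQ g) p q
          + hbar * σ ^ 2 / 2 * p ^ 0 * pdQ (pdP (pdP g)) p q := by
    rw [pdQ_add (Sm_monomial _ _ hQ) (Sm_monomial _ _ hPP),
        pdQ_monomial _ _ hQ, pdQ_monomial _ _ hPP]
  have dq2 : pdQ (fun p q => (-1) * p ^ 1 * pdQ (pdQ g) p q
        + hbar * σ ^ 2 / 2 * p ^ 0 * pdQ (pdP (pdP g)) p q)
      = fun p q => (-1) * p ^ 1 * pdQ (pdQ (pdQ g)) p q
          + hbar * σ ^ 2 / 2 * p ^ 0 * pdQ (pdQ (pdP (pdP g))) p q := by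
    rw [pdQ_add (Sm_monomial _ _ hQQ) (Sm_monomial _ _ hPP.pdQ'),
        pdQ_monomial _ _ hQQ, pdQ_monomial _ _ hPP.pdQ']
  have dq3 : pdP (fun p q => (-1) * p ^ 1 * pdQ (pdQ (pdQ g)) p q
        + hbar * σ ^ 2 / 2 * p ^ 0 * pdQ (pdQ (pdP (pdP g))) p q)
      = fun p q => ((-1) * p ^ 0 * pdQ (pdQ (pdQ g)) p q
            + (-1) * p ^ 1 * pdP (pdQ (pdQ (pdQ g))) p q)
          + hbar * σ ^ 2 / 2 * p ^ 0 * pdP (pdQ (pdQ (pdP (pdP g)))) p q := by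
    rw [pdP_add (Sm_monomial _ _ hQQQ) (Sm_monomial _ _ hPP.pdQ'.pdQ'),
        pdP_monomial _ _ hQQQ, pdP_monomial _ _ hPP.pdQ'.pdQ']
    funext p q; push_cast; ring
  funext p q
  rw [show adL hbar σ 2 g = fun p q => opL1 hbar σ (adL hbar σ 1 g) p q
      - adL hbar σ 1 (opL1 hbar σ g) p q from rfl]
  rw [ad1_eq hbar σ hg, ad1_eq hbar σ hL1, eF1, e1]
  simp only [opL1]
  rw [dqF1, dpF1, dppF1, dq1, dq2, dq3]
  simp only [pdQP_swap hg, pdQP_swap hQ, pdQP_swap hQQ, pdQP_swap hQQQ, pdQP_swap hP,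
    pdQP_swap hPP, pdQP_swap hQ.pdP', pdQP_swap hQQ.pdP', pdQP_swap hQ.pdP'.pdP',
    pdQP_swap hP.pdQ', pdQP_swap hPP.pdQ', pdQP_swap hP.pdQ'.pdP', pdQP_swap hPQQ]
  ring

lemma ad3_eq (hbar σ : ℝ) {g : ℝ → ℝ → ℝ} (hg : Sm g) :
    adL hbar σ 3 g = fun p q => 3 * hbar ^ 3 * σ ^ 4 * pdP (pdQ (pdQ (pdQ g))) p q := by
  have hQ := hg.pdQ'; have hQQ := hQ.pdQ'; have hQQQ := hQQ.pdQ'; have hQQQQ := hQQQ.pdQ'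
  have hP := hg.pdP'; have hPP := hP.pdP'
  have hPQQ := hQQ.pdP'; have hPPQQ := hPQQ.pdP'; have hPPPQQ := hPPQQ.pdP'
  have hPQQQ := hQQQ.pdP'; have hPPQQQ := hPQQQ.pdP'
  have hQPP := hPP.pdQ'; have hQQPP := hQPP.pdQ'; have hQQQPP := hQQPP.pdQ'
  have hPQQPP := hQQPP.pdP'
  have hL1 := Sm_opL1 hbar σ hg
  -- canonical ad2 form and its derivatives
  have eF2 : (fun p q => hbar ^ 2 * σ ^ 2 * (p * pdQ (pdQ (pdQ g)) p q
        + hbar * σ ^ 2 * pdP (pdP (pdQ (pdQ g))) p q))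
      = fun p q => hbar ^ 2 * σ ^ 2 * p ^ 1 * pdQ (pdQ (pdQ g)) p q
          + hbar ^ 3 * σ ^ 4 * p ^ 0 * pdP (pdP (pdQ (pdQ g))) p q := by
    funext p q; ring
  have dqF2 : pdQ (fun p q => hbar ^ 2 * σ ^ 2 * p ^ 1 * pdQ (pdQ (pdQ g)) p q
        + hbar ^ 3 * σ ^ 4 * p ^ 0 * pdP (pdP (pdQ (pdQ g))) p q)
      = fun p q => hbar ^ 2 * σ ^ 2 * p ^ 1 * pdQ (pdQ (pdQ (pdQ g))) p q
          + hbar ^ 3 * σ ^ 4 * p ^ 0 * pdQ (pdP (pdP (pdQ (pdQ g)))) p q := by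
    rw [pdQ_add (Sm_monomial _ _ hQQQ) (Sm_monomial _ _ hPPQQ),
        pdQ_monomial _ _ hQQQ, pdQ_monomial _ _ hPPQQ]
  have dpF2 : pdP (fun p q => hbar ^ 2 * σ ^ 2 * p ^ 1 * pdQ (pdQ (pdQ g)) p q
        + hbar ^ 3 * σ ^ 4 * p ^ 0 * pdP (pdP (pdQ (pdQ g))) p q)
      = fun p q => hbar ^ 2 * σ ^ 2 * p ^ 0 * pdQ (pdQ (pdQ g)) p q
          + hbar ^ 2 * σ ^ 2 * p ^ 1 * pdP (pdQ (pdQ (pdQ g))) p q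
          + hbar ^ 3 * σ ^ 4 * p ^ 0 * pdP (pdP (pdP (pdQ (pdQ g)))) p q := by
    rw [pdP_add (Sm_monomial _ _ hQQQ) (Sm_monomial _ _ hPPQQ),
        pdP_monomial _ _ hQQQ, pdP_monomial _ _ hPPQQ]
    funext p q; push_cast; ring
  have dppF2 : pdP (fun p q => hbar ^ 2 * σ ^ 2 * p ^ 0 * pdQ (pdQ (pdQ g)) p q
        + hbar ^ 2 * σ ^ 2 * p ^ 1 * pdP (pdQ (pdQ (pdQ g))) p q
        + hbar ^ 3 * σ ^ 4 * p ^ 0 * pdP (pdP (pdP (pdQ (pdQ g)))) p q)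
      = fun p q => 2 * hbar ^ 2 * σ ^ 2 * p ^ 0 * pdP (pdQ (pdQ (pdQ g))) p q
          + hbar ^ 2 * σ ^ 2 * p ^ 1 * pdP (pdP (pdQ (pdQ (pdQ g)))) p q
          + hbar ^ 3 * σ ^ 4 * p ^ 0 * pdP (pdP (pdP (pdP (pdQ (pdQ g))))) p q := by
    rw [pdP_add (Sm_add (Sm_monomial _ _ hQQQ) (Sm_monomial _ _ hPQQQ)) (Sm_monomial _ _ hPPPQQ),
        pdP_add (Sm_monomial _ _ hQQQ) (Sm_monomial _ _ hPQQQ),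
        pdP_monomial _ _ hQQQ, pdP_monomial _ _ hPQQQ, pdP_monomial _ _ hPPPQQ]
    funext p q; push_cast; ring
  -- canonical opL1 g and its derivatives
  have e1 : opL1 hbar σ g = fun p q =>
      (-1) * p ^ 1 * pdQ g p q + hbar * σ ^ 2 / 2 * p ^ 0 * pdP (pdP g) p q := by
    funext p q; simp only [opL1]; ring
  have dq1 : pdQ (fun p q => (-1) * p ^ 1 * pdQ g p q
        + hbar * σ ^ 2 / 2 * p ^ 0 * pdP (pdP g) p q)
      = fun p q => (-1) * p ^ 1 * pdQ (pdQ g) p q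
          + hbar * σ ^ 2 / 2 * p ^ 0 * pdQ (pdP (pdP g)) p q := by
    rw [pdQ_add (Sm_monomial _ _ hQ) (Sm_monomial _ _ hPP),
        pdQ_monomial _ _ hQ, pdQ_monomial _ _ hPP]
  have dq2 : pdQ (fun p q => (-1) * p ^ 1 * pdQ (pdQ g) p q
        + hbar * σ ^ 2 / 2 * p ^ 0 * pdQ (pdP (pdP g)) p q)
      = fun p q => (-1) * p ^ 1 * pdQ (pdQ (pdQ g)) p q
          + hbar * σ ^ 2 / 2 * p ^ 0 * pdQ (pdQ (pdP (pdP g))) p q := by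
    rw [pdQ_add (Sm_monomial _ _ hQQ) (Sm_monomial _ _ hQPP),
        pdQ_monomial _ _ hQQ, pdQ_monomial _ _ hQPP]
  have dq3Q : pdQ (fun p q => (-1) * p ^ 1 * pdQ (pdQ (pdQ g)) p q
        + hbar * σ ^ 2 / 2 * p ^ 0 * pdQ (pdQ (pdP (pdP g))) p q)
      = fun p q => (-1) * p ^ 1 * pdQ (pdQ (pdQ (pdQ g))) p q
          + hbar * σ ^ 2 / 2 * p ^ 0 * pdQ (pdQ (pdQ (pdP (pdP g)))) p q := by
    rw [pdQ_add (Sm_monomial _ _ hQQQ) (Sm_monomial _ _ hQQPP),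
        pdQ_monomial _ _ hQQQ, pdQ_monomial _ _ hQQPP]
  have dq3 : pdP (fun p q => (-1) * p ^ 1 * pdQ (pdQ (pdQ g)) p q
        + hbar * σ ^ 2 / 2 * p ^ 0 * pdQ (pdQ (pdP (pdP g))) p q)
      = fun p q => (-1) * p ^ 0 * pdQ (pdQ (pdQ g)) p q
          + (-1) * p ^ 1 * pdP (pdQ (pdQ (pdQ g))) p q
          + hbar * σ ^ 2 / 2 * p ^ 0 * pdP (pdQ (pdQ (pdP (pdP g)))) p q := by
    rw [pdP_add (Sm_monomial _ _ hQQQ) (Sm_monomial _ _ hQQPP),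
        pdP_monomial _ _ hQQQ, pdP_monomial _ _ hQQPP]
    funext p q; push_cast; ring
  have dq3p : pdP (fun p q => (-1) * p ^ 0 * pdQ (pdQ (pdQ g)) p q
        + (-1) * p ^ 1 * pdP (pdQ (pdQ (pdQ g))) p q
        + hbar * σ ^ 2 / 2 * p ^ 0 * pdP (pdQ (pdQ (pdP (pdP g)))) p q)
      = fun p q => (-2) * p ^ 0 * pdP (pdQ (pdQ (pdQ g))) p q
          + (-1) * p ^ 1 * pdP (pdP (pdQ (pdQ (pdQ g)))) p q
          + hbar * σ ^ 2 / 2 * p ^ 0 * pdP (pdP (pdQ (pdQ (pdP (pdP g))))) p q := by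
    rw [pdP_add (Sm_add (Sm_monomial _ _ hQQQ) (Sm_monomial _ _ hPQQQ)) (Sm_monomial _ _ hPQQPP),
        pdP_add (Sm_monomial _ _ hQQQ) (Sm_monomial _ _ hPQQQ),
        pdP_monomial _ _ hQQQ, pdP_monomial _ _ hPQQQ, pdP_monomial _ _ hPQQPP]
    funext p q; push_cast; ring
  funext p q
  rw [show adL hbar σ 3 g = fun p q => opL1 hbar σ (adL hbar σ 2 g) p q
      - adL hbar σ 2 (opL1 hbar σ g) p q from rfl]
  rw [ad2_eq hbar σ hg, ad2_eq hbar σ hL1, eF2, e1]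
  simp only [opL1]
  rw [dqF2, dpF2, dppF2, dq1, dq2, dq3Q, dq3, dq3p]
  simp only [pdQP_swap hg, pdQP_swap hQ, pdQP_swap hQQ, pdQP_swap hQQQ, pdQP_swap hP,
    pdQP_swap hPP, pdQP_swap hQ.pdP', pdQP_swap hQQ.pdP', pdQP_swap hQ.pdP'.pdP',
    pdQP_swap hP.pdQ', pdQP_swap hPP.pdQ', pdQP_swap hP.pdQ'.pdP', pdQP_swap hPQQ,
    pdQP_swap hQQQ.pdP', pdQP_swap hQQ.pdP'.pdQ', pdQP_swap hQ.pdP'.pdQ',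
    pdQP_swap hQ.pdP'.pdQ'.pdQ', pdQP_swap hP.pdQ'.pdQ', pdQP_swap hP.pdQ'.pdQ'.pdP',
    pdQP_swap hP.pdQ'.pdP'.pdQ', pdQP_swap hQPP, pdQP_swap hQQPP, pdQP_swap hPQQ.pdQ']
  ring


lemma ad4_eq (hbar σ : ℝ) {g : ℝ → ℝ → ℝ} (hg : Sm g) :
    adL hbar σ 4 g = fun p q => 3 * hbar ^ 3 * σ ^ 4 * pdQ (pdQ (pdQ (pdQ g))) p q := by
  have hQ := hg.pdQ'; have hQQ := hQ.pdQ'; have hQQQ := hQQ.pdQ'; have hQQQQ := hQQQ.pdQ'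
  have hP := hg.pdP'; have hPP := hP.pdP'
  have hPQQQ := hQQQ.pdP'; have hPPQQQ := hPQQQ.pdP'
  have hQPP := hPP.pdQ'; have hQQPP := hQPP.pdQ'; have hQQQPP := hQQPP.pdQ'
  have hL1 := Sm_opL1 hbar σ hg
  have eF3 : (fun p q => 3 * hbar ^ 3 * σ ^ 4 * pdP (pdQ (pdQ (pdQ g))) p q)
      = fun p q => 3 * hbar ^ 3 * σ ^ 4 * p ^ 0 * pdP (pdQ (pdQ (pdQ g))) p q := by
    funext p q; ring
  have dqF3 : pdQ (fun p q => 3 * hbar ^ 3 * σ ^ 4 * p ^ 0 * pdP (pdQ (pdQ (pdQ g))) p q)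
      = fun p q => 3 * hbar ^ 3 * σ ^ 4 * p ^ 0 * pdQ (pdP (pdQ (pdQ (pdQ g)))) p q :=
    pdQ_monomial _ _ hPQQQ
  have dpF3 : pdP (fun p q => 3 * hbar ^ 3 * σ ^ 4 * p ^ 0 * pdP (pdQ (pdQ (pdQ g))) p q)
      = fun p q => 3 * hbar ^ 3 * σ ^ 4 * p ^ 0 * pdP (pdP (pdQ (pdQ (pdQ g)))) p q := by
    rw [pdP_monomial _ _ hPQQQ]; funext p q; push_cast; ring
  have dppF3 : pdP (fun p q => 3 * hbar ^ 3 * σ ^ 4 * p ^ 0 * pdP (pdP (pdQ (pdQ (pdQ g)))) p q)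
      = fun p q => 3 * hbar ^ 3 * σ ^ 4 * p ^ 0 * pdP (pdP (pdP (pdQ (pdQ (pdQ g))))) p q := by
    rw [pdP_monomial _ _ hPPQQQ]; funext p q; push_cast; ring
  have e1 : opL1 hbar σ g = fun p q =>
      (-1) * p ^ 1 * pdQ g p q + hbar * σ ^ 2 / 2 * p ^ 0 * pdP (pdP g) p q := by
    funext p q; simp only [opL1]; ring
  have dq1 : pdQ (fun p q => (-1) * p ^ 1 * pdQ g p q
        + hbar * σ ^ 2 / 2 * p ^ 0 * pdP (pdP g) p q)
      = fun p q => (-1) * p ^ 1 * pdQ (pdQ g) p q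
          + hbar * σ ^ 2 / 2 * p ^ 0 * pdQ (pdP (pdP g)) p q := by
    rw [pdQ_add (Sm_monomial _ _ hQ) (Sm_monomial _ _ hPP),
        pdQ_monomial _ _ hQ, pdQ_monomial _ _ hPP]
  have dq2 : pdQ (fun p q => (-1) * p ^ 1 * pdQ (pdQ g) p q
        + hbar * σ ^ 2 / 2 * p ^ 0 * pdQ (pdP (pdP g)) p q)
      = fun p q => (-1) * p ^ 1 * pdQ (pdQ (pdQ g)) p q
          + hbar * σ ^ 2 / 2 * p ^ 0 * pdQ (pdQ (pdP (pdP g))) p q := by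
    rw [pdQ_add (Sm_monomial _ _ hQQ) (Sm_monomial _ _ hQPP),
        pdQ_monomial _ _ hQQ, pdQ_monomial _ _ hQPP]
  have dq3Q : pdQ (fun p q => (-1) * p ^ 1 * pdQ (pdQ (pdQ g)) p q
        + hbar * σ ^ 2 / 2 * p ^ 0 * pdQ (pdQ (pdP (pdP g))) p q)
      = fun p q => (-1) * p ^ 1 * pdQ (pdQ (pdQ (pdQ g))) p q
          + hbar * σ ^ 2 / 2 * p ^ 0 * pdQ (pdQ (pdQ (pdP (pdP g)))) p q := by
    rw [pdQ_add (Sm_monomial _ _ hQQQ) (Sm_monomial _ _ hQQPP),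
        pdQ_monomial _ _ hQQQ, pdQ_monomial _ _ hQQPP]
  have dq4p : pdP (fun p q => (-1) * p ^ 1 * pdQ (pdQ (pdQ (pdQ g))) p q
        + hbar * σ ^ 2 / 2 * p ^ 0 * pdQ (pdQ (pdQ (pdP (pdP g)))) p q)
      = fun p q => (-1) * p ^ 0 * pdQ (pdQ (pdQ (pdQ g))) p q
          + (-1) * p ^ 1 * pdP (pdQ (pdQ (pdQ (pdQ g)))) p q
          + hbar * σ ^ 2 / 2 * p ^ 0 * pdP (pdQ (pdQ (pdQ (pdP (pdP g))))) p q := by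
    rw [pdP_add (Sm_monomial _ _ hQQQQ) (Sm_monomial _ _ hQQQPP),
        pdP_monomial _ _ hQQQQ, pdP_monomial _ _ hQQQPP]
    funext p q; push_cast; ring
  funext p q
  rw [show adL hbar σ 4 g = fun p q => opL1 hbar σ (adL hbar σ 3 g) p q
      - adL hbar σ 3 (opL1 hbar σ g) p q from rfl]
  rw [ad3_eq hbar σ hg, ad3_eq hbar σ hL1, eF3, e1]
  simp only [opL1]
  rw [dqF3, dpF3, dppF3, dq1, dq2, dq3Q, dq4p]
  simp only [pdQP_swap (hg), pdQP_swap (hg.pdP'), pdQP_swap (hg.pdQ'), pdQP_swap (hg.pdP'.pdP'), pdQP_swap (hg.pdQ'.pdP'), pdQP_swap (hg.pdP'.pdQ'), pdQP_swap (hg.pdQ'.pdQ'), pdQP_swap (hg.pdP'.pdP'.pdP'), pdQP_swap (hg.pdQ'.pdP'.pdP'), pdQP_swap (hg.pdP'.pdQ'.pdP'), pdQP_swap (hg.pdQ'.pdQ'.pdP'), pdQP_swap (hg.pdP'.pdP'.pdQ'), pdQP_swap (hg.pdQ'.pdP'.pdQ'), pdQP_swap (hg.pdP'.pdQ'.pdQ'),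 pdQP_swap (hg.pdQ'.pdQ'.pdQ'), pdQP_swap (hg.pdP'.pdP'.pdP'.pdP'), pdQP_swap (hg.pdQ'.pdP'.pdP'.pdP'), pdQP_swap (hg.pdP'.pdQ'.pdP'.pdP'), pdQP_swap (hg.pdQ'.pdQ'.pdP'.pdP'), pdQP_swap (hg.pdP'.pdP'.pdQ'.pdP'), pdQP_swap (hg.pdQ'.pdP'.pdQ'.pdP'), pdQP_swap (hg.pdP'.pdQ'.pdQ'.pdP'), pdQP_swap (hg.pdQ'.pdQ'.pdQ'.pdP'), pdQP_swap (hg.pdP'.pdP'.pdP'.pdQ'), pdQP_swap (hg.pdQ'.pdP'.pdP'.pdQ'), pdQP_swap (hg.pdP'.pdQ'.pdP'.pdQ'), pdQP_swap (hg.pdQ'.pdQ'.pdP'.pdQ'), pdQP_swap (hg.pdP'.pdP'.pdQ'.pdQ'), pdQP_swap (hg.pdQ'.pdP'.pdQ'.pdQ'), pdQP_swap (hg.pdP'.pdQ'.pdQ'.pdQ'), pdQP_swap (hg.pdQ'.pdQ'.pdQ'.pdQ')]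
  ring

lemma ad5_eq (hbar σ : ℝ) {g : ℝ → ℝ → ℝ} (hg : Sm g) :
    adL hbar σ 5 g = fun _ _ => (0 : ℝ) := by
  have hQ := hg.pdQ'; have hQQ := hQ.pdQ'; have hQQQ := hQQ.pdQ'; have hQQQQ := hQQQ.pdQ'
  have hQQQQQ := hQQQQ.pdQ'
  have hP := hg.pdP'; have hPP := hP.pdP'
  have hPQQQQ := hQQQQ.pdP'; have hPPQQQQ := hPQQQQ.pdP'
  have hQPP := hPP.pdQ'; have hQQPP := hQPP.pdQ'; have hQQQPP := hQQPP.pdQ'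
  have hQQQQPP := hQQQPP.pdQ'
  have hL1 := Sm_opL1 hbar σ hg
  have eF4 : (fun p q => 3 * hbar ^ 3 * σ ^ 4 * pdQ (pdQ (pdQ (pdQ g))) p q)
      = fun p q => 3 * hbar ^ 3 * σ ^ 4 * p ^ 0 * pdQ (pdQ (pdQ (pdQ g))) p q := by
    funext p q; ring
  have dqF4 : pdQ (fun p q => 3 * hbar ^ 3 * σ ^ 4 * p ^ 0 * pdQ (pdQ (pdQ (pdQ g))) p q)
      = fun p q => 3 * hbar ^ 3 * σ ^ 4 * p ^ 0 * pdQ (pdQ (pdQ (pdQ (pdQ g)))) p q :=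
    pdQ_monomial _ _ hQQQQ
  have dpF4 : pdP (fun p q => 3 * hbar ^ 3 * σ ^ 4 * p ^ 0 * pdQ (pdQ (pdQ (pdQ g))) p q)
      = fun p q => 3 * hbar ^ 3 * σ ^ 4 * p ^ 0 * pdP (pdQ (pdQ (pdQ (pdQ g)))) p q := by
    rw [pdP_monomial _ _ hQQQQ]; funext p q; push_cast; ring
  have dppF4 : pdP (fun p q => 3 * hbar ^ 3 * σ ^ 4 * p ^ 0 * pdP (pdQ (pdQ (pdQ (pdQ g)))) p q)
      = fun p q => 3 * hbar ^ 3 * σ ^ 4 * p ^ 0 * pdP (pdP (pdQ (pdQ (pdQ (pdQ g))))) p q := by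
    rw [pdP_monomial _ _ hPQQQQ]; funext p q; push_cast; ring
  have e1 : opL1 hbar σ g = fun p q =>
      (-1) * p ^ 1 * pdQ g p q + hbar * σ ^ 2 / 2 * p ^ 0 * pdP (pdP g) p q := by
    funext p q; simp only [opL1]; ring
  have dq1 : pdQ (fun p q => (-1) * p ^ 1 * pdQ g p q
        + hbar * σ ^ 2 / 2 * p ^ 0 * pdP (pdP g) p q)
      = fun p q => (-1) * p ^ 1 * pdQ (pdQ g) p q
          + hbar * σ ^ 2 / 2 * p ^ 0 * pdQ (pdP (pdP g)) p q := by
    rw [pdQ_add (Sm_monomial _ _ hQ) (Sm_monomial _ _ hPP),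
        pdQ_monomial _ _ hQ, pdQ_monomial _ _ hPP]
  have dq2 : pdQ (fun p q => (-1) * p ^ 1 * pdQ (pdQ g) p q
        + hbar * σ ^ 2 / 2 * p ^ 0 * pdQ (pdP (pdP g)) p q)
      = fun p q => (-1) * p ^ 1 * pdQ (pdQ (pdQ g)) p q
          + hbar * σ ^ 2 / 2 * p ^ 0 * pdQ (pdQ (pdP (pdP g))) p q := by
    rw [pdQ_add (Sm_monomial _ _ hQQ) (Sm_monomial _ _ hQPP),
        pdQ_monomial _ _ hQQ, pdQ_monomial _ _ hQPP]
  have dq3Q : pdQ (fun p q => (-1) * p ^ 1 * pdQ (pdQ (pdQ g)) p q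
        + hbar * σ ^ 2 / 2 * p ^ 0 * pdQ (pdQ (pdP (pdP g))) p q)
      = fun p q => (-1) * p ^ 1 * pdQ (pdQ (pdQ (pdQ g))) p q
          + hbar * σ ^ 2 / 2 * p ^ 0 * pdQ (pdQ (pdQ (pdP (pdP g)))) p q := by
    rw [pdQ_add (Sm_monomial _ _ hQQQ) (Sm_monomial _ _ hQQPP),
        pdQ_monomial _ _ hQQQ, pdQ_monomial _ _ hQQPP]
  have dq4Q : pdQ (fun p q => (-1) * p ^ 1 * pdQ (pdQ (pdQ (pdQ g))) p q
        + hbar * σ ^ 2 / 2 * p ^ 0 * pdQ (pdQ (pdQ (pdP (pdP g)))) p q)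
      = fun p q => (-1) * p ^ 1 * pdQ (pdQ (pdQ (pdQ (pdQ g)))) p q
          + hbar * σ ^ 2 / 2 * p ^ 0 * pdQ (pdQ (pdQ (pdQ (pdP (pdP g))))) p q := by
    rw [pdQ_add (Sm_monomial _ _ hQQQQ) (Sm_monomial _ _ hQQQPP),
        pdQ_monomial _ _ hQQQQ, pdQ_monomial _ _ hQQQPP]
  funext p q
  rw [show adL hbar σ 5 g = fun p q => opL1 hbar σ (adL hbar σ 4 g) p q
      - adL hbar σ 4 (opL1 hbar σ g) p q from rfl]
  rw [ad4_eq hbar σ hg, ad4_eq hbar σ hL1, eF4, e1]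
  simp only [opL1]
  rw [dqF4, dpF4, dppF4, dq1, dq2, dq3Q, dq4Q]
  simp only [pdQP_swap (hg), pdQP_swap (hg.pdP'), pdQP_swap (hg.pdQ'), pdQP_swap (hg.pdP'.pdP'), pdQP_swap (hg.pdQ'.pdP'), pdQP_swap (hg.pdP'.pdQ'), pdQP_swap (hg.pdQ'.pdQ'), pdQP_swap (hg.pdP'.pdP'.pdP'), pdQP_swap (hg.pdQ'.pdP'.pdP'), pdQP_swap (hg.pdP'.pdQ'.pdP'), pdQP_swap (hg.pdQ'.pdQ'.pdP'), pdQP_swap (hg.pdP'.pdP'.pdQ'), pdQP_swap (hg.pdQ'.pdP'.pdQ'), pdQP_swap (hg.pdP'.pdQ'.pdQ'), pdQP_swap (hg.pdQ'.pdQ'.pdQ'), pdQP_swap (hg.pdP'.pdP'.pdP'.pdP'), pdQP_swap (hg.pdQ'.pdP'.pdP'.pdP'), pdQP_swap (hg.pdP'.pdQ'.pdP'.pdP'), pdQP_swap (hg.pdQ'.pdQ'.pdP'.pdP'), pdQP_swap (hg.pdP'.pdP'.pdQ'.pdP'), pdQP_swap (hg.pdQ'.pdP'.pdQ'.pdP'),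 pdQP_swap (hg.pdP'.pdQ'.pdQ'.pdP'), pdQP_swap (hg.pdQ'.pdQ'.pdQ'.pdP'), pdQP_swap (hg.pdP'.pdP'.pdP'.pdQ'), pdQP_swap (hg.pdQ'.pdP'.pdP'.pdQ'), pdQP_swap (hg.pdP'.pdQ'.pdP'.pdQ'), pdQP_swap (hg.pdQ'.pdQ'.pdP'.pdQ'), pdQP_swap (hg.pdP'.pdP'.pdQ'.pdQ'), pdQP_swap (hg.pdQ'.pdP'.pdQ'.pdQ'), pdQP_swap (hg.pdP'.pdQ'.pdQ'.pdQ'), pdQP_swap (hg.pdQ'.pdQ'.pdQ'.pdQ')]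
  ring

end Helpers

/-- For every smooth phase-space function `f`, the iterated
commutators of `L₁ = −p∂_q + (ℏσ²/2)∂_p²` and `L₂ = (ℏ/2)p²∂_q²` are
(i) `ad¹(f) = (ℏ²σ²/2)(2p∂_p∂_q²f + ∂_q²f)`,
(ii) `ad²(f) = ℏ²σ²(p∂_q³f + ℏσ²∂_p²∂_q²f)`,
(iii) `ad³(f) = 3ℏ³σ⁴∂_p∂_q³f`, (iv) `ad⁴(f) = 3ℏ³σ⁴∂_q⁴f`, (v) `ad⁵(f) = 0`;
the commutator expansion terminates after `k = 4`. -/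

theorem stmt18 (hbar σ : ℝ) (hhbar : 0 < hbar) (hσ : 0 < σ)
    (f : ℝ → ℝ → ℝ) (hf : ContDiff ℝ (⊤ : ℕ∞) (Function.uncurry f)) :
    (∀ p q : ℝ, adL hbar σ 1 f p q =
      hbar ^ 2 * σ ^ 2 / 2 * (2 * p * pdP (pdQ (pdQ f)) p q + pdQ (pdQ f) p q)) ∧
    (∀ p q : ℝ, adL hbar σ 2 f p q =
      hbar ^ 2 * σ ^ 2 * (p * pdQ (pdQ (pdQ f)) p q
        + hbar * σ ^ 2 * pdP (pdP (pdQ (pdQ f))) p q)) ∧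
    (∀ p q : ℝ, adL hbar σ 3 f p q = 3 * hbar ^ 3 * σ ^ 4 * pdP (pdQ (pdQ (pdQ f))) p q) ∧
    (∀ p q : ℝ, adL hbar σ 4 f p q = 3 * hbar ^ 3 * σ ^ 4 * pdQ (pdQ (pdQ (pdQ f))) p q) ∧
    (∀ p q : ℝ, adL hbar σ 5 f p q = 0) := by
  have hg : Sm f := hf.of_le (by simp)
  refine ⟨fun p q => ?_, fun p q => ?_, fun p q => ?_, fun p q => ?_, fun p q => ?_⟩
  · exact congrFun (congrFun (ad1_eq hbar σ hg) p) q
  · exact congrFun (congrFun (ad2_eq hbar σ hg) p) q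
  · exact congrFun (congrFun (ad3_eq hbar σ hg) p) q
  · exact congrFun (congrFun (ad4_eq hbar σ hg) p) q
  · exact congrFun (congrFun (ad5_eq hbar σ hg) p) q
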